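/- arXiv:1309.7498 — 7 statements merged into one kernel-verified Lean document; each statement's English description precedes it below -/
import Mathlib

section
/- Let C > 0 and 0 ≤ P ≤ C²/2 be real numbers. Then the radicand R = C² − (3/2)·P − P²/C² is nonnegative, and the numbers x = P/(2C) and y = (C + √R)/2 satisfy P = 2·C·x and (3/4)·P = 2·C·y − 2·(x² + y²). -/
/-!
With `x = P / (2C)`, the reactive-power balance `Q = 2Cy - 2(x² + y²)` is the monic quadratic
`y² - Cy + (x² + Q/2) = 0` in `y`, whose discriminant at `Q = (3/4)P` is the radicand
`R = (C² - 2P)(C² + P/2) / C²`; this is nonnegative exactly when `-2C² ≤ P ≤ C²/2`, and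
`y = (C + √R)/2` is the larger root.
-/

theorem radicand_eq_mul_div {C : ℝ} (hC : C ≠ 0) (P : ℝ) :
    C ^ 2 - 3 / 2 * P - P ^ 2 / C ^ 2 = (C ^ 2 - 2 * P) * (C ^ 2 + P / 2) / C ^ 2 := by
  field_simp
  ring

theorem radicand_nonneg {C P : ℝ} (hC : C ≠ 0) (hP0 : 0 ≤ P) (hP1 : P ≤ C ^ 2 / 2) :
    0 ≤ C ^ 2 - 3 / 2 * P - P ^ 2 / C ^ 2 := by
  rw [radicand_eq_mul_div hC]
  exact div_nonneg (mul_nonneg (by linarith) (by positivity)) (sq_nonneg C)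

theorem discrim_reactive_balance {C : ℝ} (hC : C ≠ 0) (P Q : ℝ) :
    discrim 1 (-C) ((P / (2 * C)) ^ 2 + Q / 2) = C ^ 2 - 2 * Q - P ^ 2 / C ^ 2 := by
  rw [discrim]
  field_simp
  ring

theorem reactive_balance_of_quadratic_eq_zero {C x y Q : ℝ}
    (h : 1 * (y * y) + -C * y + (x ^ 2 + Q / 2) = 0) : Q = 2 * C * y - 2 * (x ^ 2 + y ^ 2) := by
  linear_combination 2 * h

/-- For real `C > 0` and `0 ≤ P ≤ C²/2`, the radicand `R = C² - (3/2)·P - P²/C²` is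
nonnegative, and `x = P/(2C)`, `y = (C + √R)/2` satisfy `P = 2·C·x` and
`(3/4)·P = 2·C·y - 2·(x² + y²)` (the higher-voltage power-flow solution). -/
theorem higher_voltage_solution (C P : ℝ) (hC : 0 < C) (hP0 : 0 ≤ P) (hP1 : P ≤ C ^ 2 / 2) :
    0 ≤ C ^ 2 - 3 / 2 * P - P ^ 2 / C ^ 2 ∧
    P = 2 * C * (P / (2 * C)) ∧
    (3 / 4) * P = 2 * C * ((C + Real.sqrt (C ^ 2 - 3 / 2 * P - P ^ 2 / C ^ 2)) / 2) -
      2 * ((P / (2 * C)) ^ 2 + ((C + Real.sqrt (C ^ 2 - 3 / 2 * P - P ^ 2 / C ^ 2)) / 2) ^ 2) := by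
  have hR := radicand_nonneg hC.ne' hP0 hP1
  refine ⟨hR, by field_simp, reactive_balance_of_quadratic_eq_zero ?_⟩
  have hdisc : discrim 1 (-C) ((P / (2 * C)) ^ 2 + 3 / 4 * P / 2) =
      √(C ^ 2 - 3 / 2 * P - P ^ 2 / C ^ 2) * √(C ^ 2 - 3 / 2 * P - P ^ 2 / C ^ 2) := by
    rw [Real.mul_self_sqrt hR, discrim_reactive_balance hC.ne']
    ring
  refine (quadratic_eq_zero_iff one_ne_zero hdisc _).2 (Or.inl ?_)
  ring
end

section
/- The function φ ↦ 𝒫(1/4, φ) is differentiable at φ = 0 with derivative equal to 7/16. -/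
/-- The model supplied power `𝒫(P, φ) = Pₛ/2 + (S/2)·(C + √(C² - (3/2)·Pₛ - Pₛ²/C²))`,
where `C = cos(φ/2)`, `S = sin(φ/2)`, `Pₛ = min(P, C²/2)`; `Real.sqrt` is `0` on negative
arguments and division by zero is zero, as in Lean's conventions. -/
noncomputable def calP (P φ : ℝ) : ℝ :=
  let C := Real.cos (φ / 2)
  let Ps := min P (C ^ 2 / 2)
  Ps / 2 + Real.sin (φ / 2) / 2 *
    (C + Real.sqrt (C ^ 2 - 3 / 2 * Ps - Ps ^ 2 / C ^ 2))

/-!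
Near `φ = 0` the saturation `Pₛ = min(P, C²/2)` is inactive when `P < 1/2`, so the first
summand `Pₛ/2` is locally constant. The second summand is `sin(φ/2)/2` times a factor that is
merely continuous at `0`; since `sin(φ/2)/2` vanishes there, its derivative `1/4` times the
value `1 + √(1 - 3P/2 - P²)` of that factor is the derivative of the product. For `P = 1/4`
this gives `(1 + 3/4)/4 = 7/16`.
-/

open Filter Topology Real

theorem HasDerivAt.mul_continuousAt_of_eq_zero {𝕜 : Type*} [NontriviallyNormedField 𝕜]
    {f g : 𝕜 → 𝕜} {f' x : 𝕜}
    (hf : HasDerivAt f f' x) (hfx : f x = 0) (hg : ContinuousAt g x) :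
    HasDerivAt (fun y => f y * g y) (f' * g x) x := by
  rw [hasDerivAt_iff_tendsto_slope] at hf ⊢
  have hslope : slope (fun y => f y * g y) x = fun y => slope f x y * g y := by
    ext y
    simp only [slope_def_field, hfx, zero_mul, sub_zero]
    ring
  rw [hslope]
  exact hf.mul (hg.tendsto.mono_left nhdsWithin_le_nhds)

theorem eventually_min_cos_sq_eq {P : ℝ} (hP : P < 1 / 2) :
    ∀ᶠ φ in 𝓝 0, min P (cos (φ / 2) ^ 2 / 2) = P := by
  have hcont : ContinuousAt (fun φ : ℝ => cos (φ / 2) ^ 2 / 2) 0 := by fun_prop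
  have hlt : P < cos ((0 : ℝ) / 2) ^ 2 / 2 := by simpa using hP
  filter_upwards [hcont.eventually (eventually_gt_nhds hlt)] with φ hφ
  exact min_eq_left hφ.le

theorem calP_hasDerivAt_zero {P : ℝ} (hP : P < 1 / 2) :
    HasDerivAt (calP P) ((1 + √(1 - 3 / 2 * P - P ^ 2)) / 4) 0 := by
  set Ps : ℝ → ℝ := fun φ => min P (cos (φ / 2) ^ 2 / 2)
  set H : ℝ → ℝ := fun φ =>
    cos (φ / 2) + √(cos (φ / 2) ^ 2 - 3 / 2 * Ps φ - Ps φ ^ 2 / cos (φ / 2) ^ 2)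
  have hPs : HasDerivAt Ps 0 0 :=
    (hasDerivAt_const 0 P).congr_of_eventuallyEq (eventually_min_cos_sq_eq hP)
  have hsin : HasDerivAt (fun φ => sin (φ / 2) / 2) (1 / 4) 0 :=
    (((hasDerivAt_id (0 : ℝ)).div_const 2).sin.div_const 2).congr_deriv (by norm_num)
  have hH : ContinuousAt H 0 := by
    unfold H Ps
    fun_prop (disch := simp)
  have hH0 : H 0 = 1 + √(1 - 3 / 2 * P - P ^ 2) := by
    simp only [H, Ps, zero_div, cos_zero, one_pow, div_one]
    rw [min_eq_left hP.le]
  exact ((hPs.div_const 2).add (hsin.mul_continuousAt_of_eq_zero (by simp) hH)).congr_deriv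
    (by rw [hH0]; ring)

/-- The function `φ ↦ 𝒫(1/4, φ)` is differentiable at `φ = 0` with derivative `7/16`. -/
theorem calP_deriv_at_NOP : HasDerivAt (fun φ : ℝ => calP (1 / 4) φ) (7 / 16) 0 := by
  have hsqrt : √(1 - 3 / 2 * (1 / 4) - (1 / 4) ^ 2 : ℝ) = 3 / 4 := by
    rw [Real.sqrt_eq_iff_mul_self_eq] <;> norm_num
  exact (calP_hasDerivAt_zero (by norm_num)).congr_deriv (by rw [hsqrt]; norm_num)
end

section
/- 𝒫(1/4, π − arctan(1/2)) = 1/8. Consequently, with mechanical power input P_mech = 1/8 and constant power demand P = 1/4, the point φ = π − arctan(1/2), φ' = 0 is a steady state (the saddle point) of the swing dynamics φ'' + D·φ' = P_mech − 𝒫(P, φ). -/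
open Real

lemma sin_arctan_eq_mul_cos_arctan (x : ℝ) : sin (arctan x) = x * cos (arctan x) := by
  rw [sin_arctan, cos_arctan]
  ring

lemma calP_of_half_cos_sq_le {P φ : ℝ} (h : cos (φ / 2) ^ 2 / 2 ≤ P) :
    calP P φ = (1 + cos φ + 2 * sin φ) / 8 := by
  set C := cos (φ / 2) with hC
  have hmin : min P (C ^ 2 / 2) = C ^ 2 / 2 := min_eq_right h
  have hradicand : C ^ 2 - 3 / 2 * (C ^ 2 / 2) - (C ^ 2 / 2) ^ 2 / C ^ 2 = 0 := by
    rcases eq_or_ne C 0 with hC0 | hC0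
    · simp [hC0]
    · field_simp
      ring
  have hcos : cos φ = 2 * C ^ 2 - 1 := by
    rw [hC, ← cos_two_mul, mul_div_cancel₀ φ two_ne_zero]
  have hsin : sin φ = 2 * sin (φ / 2) * C := by
    rw [hC, ← sin_two_mul, mul_div_cancel₀ φ two_ne_zero]
  simp only [calP, ← hC, hmin, hradicand, sqrt_zero, add_zero, hcos, hsin]
  ring

lemma calP_quarter_pi_sub_arctan_half : calP (1 / 4) (π - arctan (1 / 2)) = 1 / 8 := by
  have hsin : sin (arctan (1 / 2)) = 1 / 2 * cos (arctan (1 / 2)) :=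
    sin_arctan_eq_mul_cos_arctan _
  have hcos_pos : 0 < cos (arctan (1 / 2)) := cos_arctan_pos _
  have hsaturated : cos ((π - arctan (1 / 2)) / 2) ^ 2 / 2 ≤ 1 / 4 := by
    rw [cos_sq, mul_div_cancel₀ _ two_ne_zero, cos_pi_sub]
    linarith
  rw [calP_of_half_cos_sq_le hsaturated, cos_pi_sub, sin_pi_sub, hsin]
  ring

/-- `𝒫(1/4, π - arctan(1/2)) = 1/8`; consequently, with `P_mech = 1/8` and constant power
demand `P = 1/4`, the constant trajectory at `φ = π - arctan(1/2)`, `φ' = 0` is a steady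
state (the saddle point) of the swing dynamics `φ'' + D·φ' = P_mech - 𝒫(P, φ)`. -/
theorem saddle_point :
    calP (1 / 4) (Real.pi - Real.arctan (1 / 2)) = 1 / 8 ∧
    ∀ D : ℝ, ∀ t : ℝ,
      deriv (deriv (fun _ : ℝ => Real.pi - Real.arctan (1 / 2))) t +
          D * deriv (fun _ : ℝ => Real.pi - Real.arctan (1 / 2)) t =
        1 / 8 - calP (1 / 4) ((fun _ : ℝ => Real.pi - Real.arctan (1 / 2)) t) := by
  refine ⟨calP_quarter_pi_sub_arctan_half, fun D t => ?_⟩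
  simp only [deriv_const', deriv_const, calP_quarter_pi_sub_arctan_half]
  ring
end

section
/- 𝒫(0, arcsin(1/4)) = 1/8. Consequently, with mechanical power input P_mech = 1/8 and power demand suddenly dropped to P = 0, the point φ = arcsin(1/4), φ' = 0 is a steady state of the swing dynamics φ'' + D·φ' = P_mech − 𝒫(P, φ). -/
/-! At zero demand `Pₛ = 0`, the square root collapses to `|cos(φ/2)|`, and on `[-π, π]` the
supplied power is `sin(φ/2) cos(φ/2) = sin φ / 2`; at `φ = arcsin(1/4)` this is `1/8`, which
balances `P_mech` while the constant trajectory has vanishing derivatives. -/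

open Real Set

theorem calP_zero_eq_half_sin {φ : ℝ} (hφ : φ ∈ Icc (-π) π) : calP 0 φ = sin φ / 2 := by
  have hC : 0 ≤ cos (φ / 2) :=
    cos_nonneg_of_mem_Icc ⟨by linarith [hφ.1], by linarith [hφ.2]⟩
  have hPs : min (0 : ℝ) (cos (φ / 2) ^ 2 / 2) = 0 := min_eq_left (by positivity)
  have hsqrt : √(cos (φ / 2) ^ 2 - 3 / 2 * 0 - 0 ^ 2 / cos (φ / 2) ^ 2) = cos (φ / 2) := by
    simpa using sqrt_sq hC
  calc calP 0 φ = sin (φ / 2) * cos (φ / 2) := by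
        simp only [calP, hPs, hsqrt]
        ring
    _ = sin φ / 2 := by
        rw [show sin φ = sin (2 * (φ / 2)) by ring_nf, sin_two_mul]
        ring

theorem calP_zero_arcsin {x : ℝ} (hx : x ∈ Icc (-1) 1) : calP 0 (arcsin x) = x / 2 := by
  have hφ : arcsin x ∈ Icc (-π) π :=
    ⟨by linarith [neg_pi_div_two_le_arcsin x, pi_pos], by linarith [arcsin_le_pi_div_two x, pi_pos]⟩
  rw [calP_zero_eq_half_sin hφ, sin_arcsin hx.1 hx.2]

/-- `𝒫(0, arcsin(1/4)) = 1/8`; consequently, with `P_mech = 1/8` and power demand suddenly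
dropped to `P = 0`, the constant trajectory at `φ = arcsin(1/4)`, `φ' = 0` is a steady state
of the swing dynamics `φ'' + D·φ' = P_mech - 𝒫(P, φ)`. -/
theorem zero_demand_fixed_point :
    calP 0 (Real.arcsin (1 / 4)) = 1 / 8 ∧
    ∀ D : ℝ, ∀ t : ℝ,
      deriv (deriv (fun _ : ℝ => Real.arcsin (1 / 4))) t +
          D * deriv (fun _ : ℝ => Real.arcsin (1 / 4)) t =
        1 / 8 - calP 0 ((fun _ : ℝ => Real.arcsin (1 / 4)) t) := by
  have hP : calP 0 (arcsin (1 / 4)) = 1 / 8 := by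
    rw [calP_zero_arcsin ⟨by norm_num, by norm_num⟩]
    norm_num
  refine ⟨hP, fun D t => ?_⟩
  simp only [deriv_const', hP]
  ring
end

section
/- Let φ be a real number with 0 < φ < 2·arccos(3/5), and set C = cos(φ/2), S = sin(φ/2), so that 3/5 < C < 1 and S > 0. Let P₀ = C²·(5C − 3)/4. Then 0 < P₀ < C²/2, the radicand satisfies C² − (3/2)·P₀ − P₀²/C² = (5·C·S/4)², and the function P ↦ 𝒫(P, φ) is differentiable at P = P₀ with derivative equal to 0 (i.e., P₀ is a critical point of the supplied power as a function of demand). -/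
/-!
Below `C²/2` the clipping `min P (C²/2)` is inactive, so near `P₀` the supplied power is the
smooth function `P/2 + (S/2)(C + √(R P))` with `R P = C² - (3/2)P - P²/C²`. Using
`S² = 1 - C²`, the radicand at `P₀ = C²(5C - 3)/4` is the perfect square `(5CS/4)²`, and then
`R'(P₀) = -(3/2) - (5C - 3)/2 = -5C/2` exactly cancels the slope `1/2` of the linear term:
`1/2 + (S/2)·(-5C/2)/(2·5CS/4) = 0`.
-/

open Real Filter Topology

noncomputable def radicand (C P : ℝ) : ℝ := C ^ 2 - 3 / 2 * P - P ^ 2 / C ^ 2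

noncomputable def unclippedPower (C S P : ℝ) : ℝ := P / 2 + S / 2 * (C + √(radicand C P))

lemma hasDerivAt_radicand (C P : ℝ) :
    HasDerivAt (radicand C) (-(3 / 2) - 2 * P / C ^ 2) P := by
  have hlin : HasDerivAt (fun P : ℝ => C ^ 2 - 3 / 2 * P) (-(3 / 2)) P := by
    simpa using ((hasDerivAt_id P).const_mul (3 / 2)).const_sub (C ^ 2)
  have hquad : HasDerivAt (fun P : ℝ => P ^ 2 / C ^ 2) (2 * P / C ^ 2) P := by
    simpa [mul_comm] using (hasDerivAt_pow 2 P).div_const (C ^ 2)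
  exact hlin.sub hquad

lemma hasDerivAt_unclippedPower {C S P : ℝ} (hR : radicand C P ≠ 0) :
    HasDerivAt (unclippedPower C S)
      (1 / 2 + S / 2 * ((-(3 / 2) - 2 * P / C ^ 2) / (2 * √(radicand C P)))) P :=
  ((hasDerivAt_id P).div_const 2).add
    ((((hasDerivAt_radicand C P).sqrt hR).const_add C).const_mul (S / 2))

lemma calP_eventuallyEq_unclippedPower {φ P₀ : ℝ} (hP₀ : P₀ < cos (φ / 2) ^ 2 / 2) :
    (fun P => calP P φ) =ᶠ[𝓝 P₀] unclippedPower (cos (φ / 2)) (sin (φ / 2)) := by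
  filter_upwards [Iio_mem_nhds hP₀] with P (hP : P < _)
  simp only [calP, unclippedPower, radicand, min_eq_left hP.le]

section CriticalDemand

variable {C S : ℝ}

lemma radicand_critical (hC : C ≠ 0) (hCS : S ^ 2 + C ^ 2 = 1) :
    radicand C (C ^ 2 * (5 * C - 3) / 4) = (5 * C * S / 4) ^ 2 := by
  have hS2 : S ^ 2 = 1 - C ^ 2 := by linarith
  have : (5 * C * S / 4) ^ 2 = 25 * C ^ 2 * (1 - C ^ 2) / 16 := by rw [← hS2]; ring
  rw [radicand, this]
  field_simp
  ring

lemma hasDerivAt_unclippedPower_critical (hC : 0 < C) (hS : 0 < S) (hCS : S ^ 2 + C ^ 2 = 1) :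
    HasDerivAt (unclippedPower C S) 0 (C ^ 2 * (5 * C - 3) / 4) := by
  have hR := radicand_critical hC.ne' hCS
  have hR0 : radicand C (C ^ 2 * (5 * C - 3) / 4) ≠ 0 := by rw [hR]; positivity
  have hderiv := hasDerivAt_unclippedPower (S := S) hR0
  rw [hR, sqrt_sq (by positivity)] at hderiv
  convert hderiv using 1
  field_simp
  ring

end CriticalDemand

section HalfAngle

variable {φ : ℝ}

lemma arccos_three_fifths_lt_pi_div_two : arccos (3 / 5) < π / 2 :=
  arccos_lt_pi_div_two.mpr (by norm_num)

lemma three_fifths_lt_cos_half (hφ0 : 0 < φ) (hφ1 : φ < 2 * arccos (3 / 5)) :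
    3 / 5 < cos (φ / 2) := by
  have := cos_lt_cos_of_nonneg_of_le_pi (by linarith)
    (arccos_three_fifths_lt_pi_div_two.le.trans (by linarith [pi_pos]))
    (by linarith : φ / 2 < arccos (3 / 5))
  rwa [cos_arccos (by norm_num) (by norm_num)] at this

lemma half_lt_pi (hφ1 : φ < 2 * arccos (3 / 5)) : φ / 2 < π := by
  linarith [arccos_three_fifths_lt_pi_div_two, pi_pos]

lemma cos_half_lt_one (hφ0 : 0 < φ) (hφ1 : φ < 2 * arccos (3 / 5)) : cos (φ / 2) < 1 := by
  simpa using cos_lt_cos_of_nonneg_of_le_pi le_rfl (half_lt_pi hφ1).le (by linarith)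

lemma sin_half_pos (hφ0 : 0 < φ) (hφ1 : φ < 2 * arccos (3 / 5)) : 0 < sin (φ / 2) :=
  sin_pos_of_pos_of_lt_pi (by linarith) (half_lt_pi hφ1)

end HalfAngle

/-- For `0 < φ < 2·arccos(3/5)`, with `C = cos(φ/2)`, `S = sin(φ/2)` (so `3/5 < C < 1`,
`S > 0`) and `P₀ = C²·(5C - 3)/4`, one has `0 < P₀ < C²/2`, the radicand equals
`(5·C·S/4)²`, and `P ↦ 𝒫(P, φ)` is differentiable at `P₀` with derivative `0`
(i.e. `P₀` is a critical point of the supplied power as a function of the demand). -/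
theorem critical_demand (φ C S P₀ : ℝ)
    (hφ0 : 0 < φ) (hφ1 : φ < 2 * Real.arccos (3 / 5))
    (hC : C = Real.cos (φ / 2)) (hS : S = Real.sin (φ / 2))
    (hP₀ : P₀ = C ^ 2 * (5 * C - 3) / 4) :
    3 / 5 < C ∧ C < 1 ∧ 0 < S ∧
    0 < P₀ ∧ P₀ < C ^ 2 / 2 ∧
    C ^ 2 - 3 / 2 * P₀ - P₀ ^ 2 / C ^ 2 = (5 * C * S / 4) ^ 2 ∧
    HasDerivAt (fun P : ℝ => calP P φ) 0 P₀ := by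
  have hC35 : 3 / 5 < C := hC ▸ three_fifths_lt_cos_half hφ0 hφ1
  have hC1 : C < 1 := hC ▸ cos_half_lt_one hφ0 hφ1
  have hS0 : 0 < S := hS ▸ sin_half_pos hφ0 hφ1
  have hCS : S ^ 2 + C ^ 2 = 1 := hS ▸ hC ▸ sin_sq_add_cos_sq (φ / 2)
  have hP₀pos : 0 < P₀ := by
    have : 0 < 5 * C - 3 := by linarith
    rw [hP₀]; positivity
  have hP₀lt : P₀ < C ^ 2 / 2 := by rw [hP₀]; nlinarith
  refine ⟨hC35, hC1, hS0, hP₀pos, hP₀lt, hP₀ ▸ radicand_critical (by positivity) hCS, ?_⟩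
  subst hC hS hP₀
  exact (hasDerivAt_unclippedPower_critical (by positivity) hS0 hCS).congr_of_eventuallyEq
    (calP_eventuallyEq_unclippedPower hP₀lt)
end

section
/- Let n, m be positive integers, let f : ℝⁿ × ℝᵐ → ℝⁿ and H : ℝᵐ → ℝ be differentiable, and let x, β : ℝ → ℝⁿ and u : ℝ → ℝᵐ be differentiable curves such that for all t: (i) x'(t) = f(x(t), u(t)); (ii) for each i, (β_i)'(t) = −∑_j β_j(t)·(∂f_j/∂x_i)(x(t), u(t)); and (iii) the derivative at u(t) of the map v ↦ H(v) − ∑_j β_j(t)·f_j(x(t), v) is zero. Then the Hamiltonian ℋ(t) = H(u(t)) − ∑_j β_j(t)·f_j(x(t), u(t)) is constant in t. -/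
/-!
Along the trajectory, `d/dt ℋ = H'(u) u' - ⟪β', f(x, u)⟫ - ⟪β, ∂ₓf x' + ∂ᵤf u'⟫`, where the
coordinate sums `∑ⱼ βⱼ yⱼ` are the Euclidean inner product `⟪β, y⟫`. Stationarity says
`H'(u) = ⟪β, ∂ᵤf ·⟫`, which cancels the `u'` terms; the costate equation says
`β' = -(∂ₓf)* β`, so with `x' = f(x, u)` the term `⟪β', f⟫` cancels `⟪β, ∂ₓf x'⟫`.
Hence `ℋ` has derivative zero everywhere and is constant.
-/

open scoped RealInnerProductSpace

section Calculus

variable {E F G : Type*} [NormedAddCommGroup E] [NormedSpace ℝ E]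
  [NormedAddCommGroup F] [NormedSpace ℝ F] [NormedAddCommGroup G] [NormedSpace ℝ G]

theorem DifferentiableAt.hasDerivAt_comp_prodMk {f : E × F → G} {x : ℝ → E} {u : ℝ → F}
    {x' : E} {u' : F} {t : ℝ} (hf : DifferentiableAt ℝ f (x t, u t))
    (hx : HasDerivAt x x' t) (hu : HasDerivAt u u' t) :
    HasDerivAt (fun s => f (x s, u s))
      (fderiv ℝ (fun v => f (v, u t)) (x t) x' + fderiv ℝ (fun w => f (x t, w)) (u t) u') t := by
  have hleft :
      fderiv ℝ (fun v => f (v, u t)) (x t) = (fderiv ℝ f (x t, u t)).comp (.inl ℝ E F) :=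
    (hf.hasFDerivAt.comp (x t) (hasFDerivAt_prodMk_left (x t) (u t))).fderiv
  have hright :
      fderiv ℝ (fun w => f (x t, w)) (u t) = (fderiv ℝ f (x t, u t)).comp (.inr ℝ E F) :=
    (hf.hasFDerivAt.comp (u t) (hasFDerivAt_prodMk_right (x t) (u t))).fderiv
  rw [hleft, hright, (fderiv ℝ f (x t, u t)).comp_inl_add_comp_inr (x', u')]
  exact hf.hasFDerivAt.comp_hasDerivAt t (hx.prodMk hu)

end Calculus

section Hamiltonian

variable {E F : Type*} [NormedAddCommGroup E] [InnerProductSpace ℝ E]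
  [NormedAddCommGroup F] [NormedSpace ℝ F]

theorem hasDerivAt_hamiltonian_zero {f : E × F → E} {H : F → ℝ} {x β : ℝ → E} {u : ℝ → F}
    {t : ℝ} (hf : DifferentiableAt ℝ f (x t, u t)) (hH : DifferentiableAt ℝ H (u t))
    (hx : DifferentiableAt ℝ x t) (hβ : DifferentiableAt ℝ β t) (hu : DifferentiableAt ℝ u t)
    (state : deriv x t = f (x t, u t))
    (costate : ∀ w, ⟪deriv β t, w⟫ = -⟪β t, fderiv ℝ (fun v => f (v, u t)) (x t) w⟫)
    (stationary : fderiv ℝ (fun v => H v - ⟪β t, f (x t, v)⟫) (u t) = 0) :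
    HasDerivAt (fun s => H (u s) - ⟪β s, f (x s, u s)⟫) 0 t := by
  set Dx := fderiv ℝ (fun v => f (v, u t)) (x t)
  set Du := fderiv ℝ (fun w => f (x t, w)) (u t)
  have hfu : HasFDerivAt (fun w => f (x t, w)) Du (u t) :=
    (hf.comp (u t) (hasFDerivAt_prodMk_right (x t) (u t)).differentiableAt).hasFDerivAt
  have hpairing : HasFDerivAt (fun v => ⟪β t, f (x t, v)⟫) ((innerSL ℝ (β t)).comp Du) (u t) :=
    (innerSL ℝ (β t)).hasFDerivAt.comp (u t) hfu
  have hgradient : ∀ w, fderiv ℝ H (u t) w = ⟪β t, Du w⟫ := by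
    intro w
    have hzero := congrArg (· w) ((hH.hasFDerivAt.sub hpairing).fderiv.symm.trans stationary)
    exact sub_eq_zero.mp hzero
  have hcurve := hH.hasFDerivAt.comp_hasDerivAt t hu.hasDerivAt |>.fun_sub
    (hβ.hasDerivAt.inner ℝ (hf.hasDerivAt_comp_prodMk hx.hasDerivAt hu.hasDerivAt))
  have hzero : fderiv ℝ H (u t) (deriv u t) - (⟪β t, Dx (deriv x t) + Du (deriv u t)⟫ +
      ⟪deriv β t, f (x t, u t)⟫) = 0 := by
    rw [hgradient, ← state, costate, inner_add_right]
    ring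
  exact hzero ▸ hcurve

end Hamiltonian

namespace EuclideanSpace

variable {ι : Type*} [Fintype ι]

theorem sum_apply_mul_apply_eq_inner (a b : EuclideanSpace ℝ ι) :
    ∑ j, a j * b j = ⟪a, b⟫ := by
  simp [PiLp.inner_apply, mul_comm]

theorem inner_eq_of_apply_eq_single [DecidableEq ι] {a : EuclideanSpace ℝ ι}
    (L : EuclideanSpace ℝ ι →L[ℝ] ℝ) (h : ∀ i, a i = L (single i 1)) (w : EuclideanSpace ℝ ι) :
    ⟪a, w⟫ = L w := by
  have hL : innerSL ℝ a = L := ContinuousLinearMap.coe_injective <|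
    (EuclideanSpace.basisFun ι ℝ).toBasis.ext fun i => by simp [h, inner_single_right]
  rw [← hL, innerSL_apply_apply]

variable {E : Type*} [NormedAddCommGroup E] [NormedSpace ℝ E]

theorem fderiv_apply_eq_apply_fderiv {g : E → EuclideanSpace ℝ ι} {y : E}
    (hg : DifferentiableAt ℝ g y) (i : ι) (w : E) :
    fderiv ℝ (fun v => g v i) y w = fderiv ℝ g y w i :=
  congrArg (· w) ((PiLp.hasFDerivAt_apply 2 (g y) i).comp y hg.hasFDerivAt).fderiv

theorem deriv_apply_eq_apply_deriv {β : ℝ → EuclideanSpace ℝ ι} {t : ℝ}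
    (hβ : DifferentiableAt ℝ β t) (i : ι) :
    deriv (fun s => β s i) t = deriv β t i :=
  fderiv_apply_eq_apply_fderiv hβ i 1

theorem inner_deriv_eq_neg_inner_fderiv [DecidableEq ι] {β : ℝ → EuclideanSpace ℝ ι}
    {g : EuclideanSpace ℝ ι → EuclideanSpace ℝ ι} {t : ℝ} {y : EuclideanSpace ℝ ι}
    (hβ : DifferentiableAt ℝ β t) (hg : DifferentiableAt ℝ g y)
    (h : ∀ i, deriv (fun s => β s i) t =
      -∑ j, β t j * fderiv ℝ (fun v => g v j) y (single i 1))
    (w : EuclideanSpace ℝ ι) :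
    ⟪deriv β t, w⟫ = -⟪β t, fderiv ℝ g y w⟫ := by
  refine inner_eq_of_apply_eq_single (-(innerSL ℝ (β t)).comp (fderiv ℝ g y)) (fun i => ?_) w
  simp_rw [← deriv_apply_eq_apply_deriv hβ, h, fderiv_apply_eq_apply_fderiv hg,
    sum_apply_mul_apply_eq_inner]
  rfl

end EuclideanSpace

theorem hamiltonian_conserved_general (n m : ℕ)
    (f : EuclideanSpace ℝ (Fin n) × EuclideanSpace ℝ (Fin m) → EuclideanSpace ℝ (Fin n))
    (H : EuclideanSpace ℝ (Fin m) → ℝ)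
    (hf : Differentiable ℝ f) (hH : Differentiable ℝ H)
    (x β : ℝ → EuclideanSpace ℝ (Fin n)) (u : ℝ → EuclideanSpace ℝ (Fin m))
    (hx : Differentiable ℝ x) (hβ : Differentiable ℝ β) (hu : Differentiable ℝ u)
    (state : ∀ t : ℝ, deriv x t = f (x t, u t))
    (costate : ∀ t : ℝ, ∀ i : Fin n,
      deriv (fun s : ℝ => β s i) t =
        -∑ j : Fin n, β t j *
          fderiv ℝ (fun v : EuclideanSpace ℝ (Fin n) => f (v, u t) j) (x t)
            (EuclideanSpace.single i 1))
    (stationary : ∀ t : ℝ,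
      fderiv ℝ (fun v : EuclideanSpace ℝ (Fin m) =>
        H v - ∑ j : Fin n, β t j * f (x t, v) j) (u t) = 0) :
    ∀ s t : ℝ,
      H (u s) - ∑ j : Fin n, β s j * f (x s, u s) j =
        H (u t) - ∑ j : Fin n, β t j * f (x t, u t) j := by
  simp_rw [EuclideanSpace.sum_apply_mul_apply_eq_inner] at stationary ⊢
  have hslice (t : ℝ) : DifferentiableAt ℝ (fun v => f (v, u t)) (x t) := by fun_prop
  have hconst (t : ℝ) : HasDerivAt (fun s => H (u s) - ⟪β s, f (x s, u s)⟫) 0 t :=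
    hasDerivAt_hamiltonian_zero (hf _) (hH _) (hx t) (hβ t) (hu t) (state t)
      (EuclideanSpace.inner_deriv_eq_neg_inner_fderiv (hβ t) (hslice t) (costate t))
      (stationary t)
  exact is_const_of_deriv_eq_zero (fun t => (hconst t).differentiableAt)
    (fun t => (hconst t).deriv)

/-- Pontryagin/Euler–Lagrange conservation of the Hamiltonian: if `x' = f(x, u)` (state
equation), `βᵢ' = -∑ⱼ βⱼ·∂fⱼ/∂xᵢ` (costate equation), and `u(t)` is a stationary point of
`v ↦ H(v) - ∑ⱼ βⱼ·fⱼ(x, v)` (first-order minimum condition), then the Hamiltonian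
`ℋ(t) = H(u(t)) - ∑ⱼ βⱼ(t)·fⱼ(x(t), u(t))` is constant in `t`. -/
theorem hamiltonian_conserved (n m : ℕ) (hn : 0 < n) (hm : 0 < m)
    (f : EuclideanSpace ℝ (Fin n) × EuclideanSpace ℝ (Fin m) → EuclideanSpace ℝ (Fin n))
    (H : EuclideanSpace ℝ (Fin m) → ℝ)
    (hf : Differentiable ℝ f) (hH : Differentiable ℝ H)
    (x β : ℝ → EuclideanSpace ℝ (Fin n)) (u : ℝ → EuclideanSpace ℝ (Fin m))
    (hx : Differentiable ℝ x) (hβ : Differentiable ℝ β) (hu : Differentiable ℝ u)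
    (state : ∀ t : ℝ, deriv x t = f (x t, u t))
    (costate : ∀ t : ℝ, ∀ i : Fin n,
      deriv (fun s : ℝ => β s i) t =
        -∑ j : Fin n, β t j *
          fderiv ℝ (fun v : EuclideanSpace ℝ (Fin n) => f (v, u t) j) (x t)
            (EuclideanSpace.single i 1))
    (stationary : ∀ t : ℝ,
      fderiv ℝ (fun v : EuclideanSpace ℝ (Fin m) =>
        H v - ∑ j : Fin n, β t j * f (x t, v) j) (u t) = 0) :
    ∀ s t : ℝ,
      H (u s) - ∑ j : Fin n, β s j * f (x s, u s) j =
        H (u t) - ∑ j : Fin n, β t j * f (x t, u t) j :=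
  hamiltonian_conserved_general n m f H hf hH x β u hx hβ hu state costate stationary
end

section
/- Let D > 0 and let φ, ω : ℝ → ℝ be differentiable functions with φ'(t) = ω(t) and ω'(t) = D·ω(t) − (7/16)·φ(t) for all t, such that φ(t) → 0 and ω(t) → 0 as t → −∞ and ω² is integrable on (−∞, 0]. Then 128·D²·∫_{−∞}^{0} ω(t)² dt = 4·D·(7·φ(0)² + 16·ω(0)²). (Equivalently, the energy E = 7φ²/32 + ω²/2 satisfies dE/dt = D·ω² along such trajectories, so ∫_{−∞}^{0} ω² dt = E(0)/D.) -/
open MeasureTheory Filter Set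

/-! Along `φ' = ω`, `ω' = D ω - k φ` the energy `E = k φ² / 2 + ω² / 2` satisfies
`E' = D ω²`. Since `E → 0` as `t → -∞`, integrating over `(-∞, 0]` gives
`D ∫ ω² = E(0)`, and for `k = 7/16` the claim is this identity multiplied by `128 D`. -/

noncomputable def oscillatorEnergy (k : ℝ) (φ ω : ℝ → ℝ) (t : ℝ) : ℝ :=
  k / 2 * φ t ^ 2 + ω t ^ 2 / 2

section

variable {D k : ℝ} {φ ω : ℝ → ℝ}

theorem hasDerivAt_oscillatorEnergy {t : ℝ} (hφ : HasDerivAt φ (ω t) t)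
    (hω : HasDerivAt ω (D * ω t - k * φ t) t) :
    HasDerivAt (oscillatorEnergy k φ ω) (D * ω t ^ 2) t :=
  (((hφ.pow 2).const_mul (k / 2)).add ((hω.pow 2).div_const 2)).congr_deriv (by ring)

theorem tendsto_oscillatorEnergy_atBot (hφ : Tendsto φ atBot (nhds 0))
    (hω : Tendsto ω atBot (nhds 0)) :
    Tendsto (oscillatorEnergy k φ ω) atBot (nhds 0) := by
  unfold oscillatorEnergy
  simpa using ((hφ.pow 2).const_mul (k / 2)).add ((hω.pow 2).div_const 2)

theorem mul_integral_Iic_sq_eq_oscillatorEnergy (a : ℝ)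
    (hφ : ∀ t ≤ a, HasDerivAt φ (ω t) t)
    (hω : ∀ t ≤ a, HasDerivAt ω (D * ω t - k * φ t) t)
    (hφ₀ : Tendsto φ atBot (nhds 0)) (hω₀ : Tendsto ω atBot (nhds 0))
    (hint : IntegrableOn (fun t => ω t ^ 2) (Iic a)) :
    D * ∫ t in Iic a, ω t ^ 2 = oscillatorEnergy k φ ω a := by
  rw [← integral_const_mul]
  simpa using integral_Iic_of_hasDerivAt_of_tendsto'
    (fun t ht => hasDerivAt_oscillatorEnergy (hφ t ht) (hω t ht)) (hint.const_mul D)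
    (tendsto_oscillatorEnergy_atBot hφ₀ hω₀)

end

theorem linearized_cost_general (D : ℝ) (φ ω : ℝ → ℝ)
    (hφ : Differentiable ℝ φ) (hω : Differentiable ℝ ω)
    (h1 : ∀ t : ℝ, deriv φ t = ω t)
    (h2 : ∀ t : ℝ, deriv ω t = D * ω t - 7 / 16 * φ t)
    (hφ0 : Filter.Tendsto φ Filter.atBot (nhds 0))
    (hω0 : Filter.Tendsto ω Filter.atBot (nhds 0))
    (hint : IntegrableOn (fun t : ℝ => ω t ^ 2) (Set.Iic 0)) :
    128 * D ^ 2 * ∫ t in Set.Iic (0 : ℝ), ω t ^ 2 =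
      4 * D * (7 * φ 0 ^ 2 + 16 * ω 0 ^ 2) := by
  have hE := mul_integral_Iic_sq_eq_oscillatorEnergy 0
    (fun t _ => (hφ t).hasDerivAt.congr_deriv (h1 t))
    (fun t _ => (hω t).hasDerivAt.congr_deriv (h2 t)) hφ0 hω0 hint
  calc 128 * D ^ 2 * ∫ t in Set.Iic (0 : ℝ), ω t ^ 2
      = 128 * D * (D * ∫ t in Set.Iic (0 : ℝ), ω t ^ 2) := by ring
    _ = 4 * D * (7 * φ 0 ^ 2 + 16 * ω 0 ^ 2) := by
      rw [hE, oscillatorEnergy]; ring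

/-- For the linearized most-probable-failure-scenario dynamics `φ' = ω`,
`ω' = D·ω - (7/16)·φ` with `D > 0`, along any trajectory coming out of the origin as
`t → -∞` (with `ω²` integrable on `(-∞, 0]`) one has
`128·D²·∫_{-∞}^{0} ω² dt = 4·D·(7·φ(0)² + 16·ω(0)²)`. -/
theorem linearized_cost (D : ℝ) (hD : 0 < D) (φ ω : ℝ → ℝ)
    (hφ : Differentiable ℝ φ) (hω : Differentiable ℝ ω)
    (h1 : ∀ t : ℝ, deriv φ t = ω t)
    (h2 : ∀ t : ℝ, deriv ω t = D * ω t - 7 / 16 * φ t)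
    (hφ0 : Filter.Tendsto φ Filter.atBot (nhds 0))
    (hω0 : Filter.Tendsto ω Filter.atBot (nhds 0))
    (hint : IntegrableOn (fun t : ℝ => ω t ^ 2) (Set.Iic 0)) :
    128 * D ^ 2 * ∫ t in Set.Iic (0 : ℝ), ω t ^ 2 =
      4 * D * (7 * φ 0 ^ 2 + 16 * ω 0 ^ 2) :=
  linearized_cost_general D φ ω hφ hω h1 h2 hφ0 hω0 hint
end
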